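/- Let X be a compact geodesic metric space and p ∈ X with 0 < sys(X,p) < ∞. Let γ be a pointed systolic loop at p, i.e., a noncontractible loop based at p of length L = sys(X,p). Suppose s ∈ [0,1] is such that the restriction of γ to [0,s] has length L/2 (hence the restriction of γ to [s,1] also has length L/2), and set q = γ(s). Then dist(p,q) = L/2; that is, γ is formed of two distance-minimizing arcs of length L/2 starting at p and ending at the common point q. -/

import Mathlib

/-- The length of a path in a pseudo-emetric space: its total variation. -/
noncomputable def pathLength {X : Type*} [PseudoEMetricSpace X] {x y : X} (γ : Path x y) :
    ENNReal :=
  eVariationOn γ Set.univ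

/-- A metric space is geodesic if any two points are joined by a path whose
length equals the distance between them. -/
def IsGeodesicSpace (X : Type*) [MetricSpace X] : Prop :=
  ∀ x y : X, ∃ γ : Path x y, pathLength γ = edist x y

/-- The systole of a metric space: the infimum of lengths of noncontractible loops. -/
noncomputable def systole (X : Type*) [MetricSpace X] : ENNReal :=
  sInf {L | ∃ (x : X) (γ : Path x x), ¬γ.Homotopic (Path.refl x) ∧ pathLength γ = L}

/-- The pointed systole at `p`: the infimum of lengths of noncontractible loops based at `p`. -/
noncomputable def pointedSystole (X : Type*) [MetricSpace X] (p : X) : ENNReal :=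
  sInf {L | ∃ γ : Path p p, ¬γ.Homotopic (Path.refl p) ∧ pathLength γ = L}

/-!
If `edist p q < L / 2` for `q = γ s`, join `p` to `q` by a minimizing path `δ`. Closing up either
half of `γ` with `δ` gives a loop at `p` of length `< L / 2 + L / 2 = sys(X, p)`, hence a
contractible one. But `γ` is homotopic to the product of these two loops, so it would be
contractible too.
-/

open Set unitInterval

section Length

variable {X : Type*} [PseudoEMetricSpace X] {x y z : X}

theorem eVariationOn_extend_comp_le {α : Type*} [LinearOrder α] (γ : Path x y) {f : α → ℝ}
    {s : Set α} (hf : MonotoneOn f s) : eVariationOn (γ.extend ∘ f) s ≤ pathLength γ :=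
  eVariationOn.comp_le_of_monotoneOn γ (projIcc 0 1 zero_le_one ∘ f)
    ((monotone_projIcc _).comp_monotoneOn hf) (mapsTo_univ _ _)

theorem pathLength_symm (γ : Path x y) : pathLength γ.symm = pathLength γ := by
  have key : ∀ {x y : X} (γ : Path x y), pathLength γ.symm ≤ pathLength γ := fun γ ↦
    eVariationOn.comp_le_of_antitoneOn γ unitInterval.symm (fun _ _ _ _ h ↦ symm_le_symm.2 h)
      (mapsTo_univ _ _)
  exact le_antisymm (key γ) (by simpa using key γ.symm)

theorem pathLength_trans_le (γ : Path x y) (γ' : Path y z) :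
    pathLength (γ.trans γ') ≤ pathLength γ + pathLength γ' := by
  let half : I := ⟨1 / 2, by norm_num, by norm_num⟩
  have hsplit := eVariationOn.Icc_add_Icc (γ.trans γ') (s := univ) (nonneg' : 0 ≤ half)
    le_one' (mem_univ _)
  simp only [univ_inter, ← univ_eq_Icc] at hsplit
  have hfirst : EqOn (γ.trans γ') (γ.extend ∘ fun t : I ↦ 2 * (t : ℝ)) (Icc 0 half) :=
    fun t ht ↦ by
      simp only [Function.comp_apply, ← Path.extend_extends' (γ.trans γ') t]
      exact Path.extend_trans_of_le_half _ _ ht.2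
  have hsecond : EqOn (γ.trans γ') (γ'.extend ∘ fun t : I ↦ 2 * (t : ℝ) - 1) (Icc half 1) :=
    fun t ht ↦ by
      simp only [Function.comp_apply, ← Path.extend_extends' (γ.trans γ') t]
      exact Path.extend_trans_of_half_le _ _ ht.1
  rw [pathLength, ← hsplit, eVariationOn.eq_of_eqOn hfirst, eVariationOn.eq_of_eqOn hsecond]
  exact add_le_add
    (eVariationOn_extend_comp_le γ fun _ _ _ _ h ↦ by simpa using h)
    (eVariationOn_extend_comp_le γ' fun _ _ _ _ h ↦ by simpa using h)

theorem pathLength_subpath_le (γ : Path x y) {t₀ t₁ : I} (h : t₀ ≤ t₁) :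
    pathLength (γ.subpath t₀ t₁) ≤ eVariationOn γ (Icc t₀ t₁) :=
  eVariationOn.comp_le_of_monotoneOn γ (Icc.convexComb t₀ t₁)
    (fun u _ v _ huv ↦ by
      have h : (t₀ : ℝ) ≤ t₁ := h
      have huv : (u : ℝ) ≤ v := huv
      simp only [← Subtype.coe_le_coe, Icc.coe_convexComb]
      nlinarith [mul_nonneg (sub_nonneg.2 huv) (sub_nonneg.2 h)])
    (fun t _ ↦ ⟨Icc.le_convexComb h t, Icc.convexComb_le h t⟩)

theorem pathLength_eq_eVariationOn_Icc_add_Icc (γ : Path x y) (t : I) :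
    pathLength γ = eVariationOn γ (Icc 0 t) + eVariationOn γ (Icc t 1) := by
  simpa [pathLength, ← univ_eq_Icc] using
    (eVariationOn.Icc_add_Icc γ (s := univ) nonneg' le_one' (mem_univ t)).symm

end Length

namespace Path

variable {X : Type*} [TopologicalSpace X] {x y : X}

theorem homotopic_subpath_trans_subpath (γ : Path x y) (t : I) :
    γ.Homotopic (((γ.subpath 0 t).cast γ.source.symm rfl).trans
      ((γ.subpath t 1).cast rfl γ.target.symm)) := by
  have h := Homotopic.pathCast ⟨Homotopy.subpathTransSubpath γ 0 t 1⟩ γ.source.symm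
    γ.target.symm
  have hγ : (γ.subpath 0 1).cast γ.source.symm γ.target.symm = γ := by ext; simp
  rw [hγ] at h
  exact h.symm

theorem trans_homotopic_refl_of_trans_symm {γ₁ δ : Path x y} {γ₂ : Path y x}
    (h₁ : (γ₁.trans δ.symm).Homotopic (Path.refl x))
    (h₂ : (δ.trans γ₂).Homotopic (Path.refl x)) :
    (γ₁.trans γ₂).Homotopic (Path.refl x) := by
  have hsplit : (γ₁.trans γ₂).Homotopic ((γ₁.trans δ.symm).trans (δ.trans γ₂)) := by
    rw [← Homotopic.Quotient.eq]
    simp only [Homotopic.Quotient.mk_trans, Homotopic.Quotient.mk_symm]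
    rw [Homotopic.Quotient.trans_assoc,
      ← Homotopic.Quotient.trans_assoc (Homotopic.Quotient.symm _),
      Homotopic.Quotient.symm_trans, Homotopic.Quotient.refl_trans]
  exact hsplit.trans ((h₁.hcomp h₂).trans (Homotopic.refl_trans _))

end Path

theorem homotopic_refl_of_pathLength_lt_pointedSystole {X : Type*} [MetricSpace X] {p : X}
    {γ : Path p p} (h : pathLength γ < pointedSystole X p) : γ.Homotopic (Path.refl p) := by
  by_contra hγ
  exact h.not_ge (by unfold pointedSystole; exact sInf_le ⟨γ, hγ, rfl⟩)

theorem pointed_systolic_loop_two_minimizing_arcs_general {X : Type*} [MetricSpace X]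
    (hgeo : IsGeodesicSpace X) (p : X)
    (hfin : pointedSystole X p ≠ ⊤)
    (γ : Path p p) (hnc : ¬γ.Homotopic (Path.refl p))
    (hlen : pathLength γ = pointedSystole X p)
    (s : unitInterval) (hs : eVariationOn γ (Set.Icc 0 s) = pathLength γ / 2) :
    edist p (γ s) = pathLength γ / 2 := by
  have hhalf : pathLength γ / 2 ≠ ⊤ := ENNReal.div_ne_top (hlen ▸ hfin) two_ne_zero
  have hs' : eVariationOn γ (Icc s 1) = pathLength γ / 2 := by
    refine (ENNReal.add_right_inj hhalf).1 ?_
    rw [← hs, ← pathLength_eq_eVariationOn_Icc_add_Icc, hs, ENNReal.add_halves]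
  refine le_antisymm ?_ (not_lt.1 fun hlt ↦ hnc ?_)
  · simpa [hs] using
      eVariationOn.edist_le γ (left_mem_Icc.2 (nonneg' : 0 ≤ s)) ⟨nonneg', le_rfl⟩
  obtain ⟨δ, hδ⟩ := hgeo p (γ s)
  have hshort : ∀ ℓ ≤ pathLength γ / 2, ℓ + pathLength δ < pointedSystole X p := fun ℓ hℓ ↦
    calc ℓ + pathLength δ ≤ pathLength γ / 2 + edist p (γ s) := by rw [hδ]; gcongr
      _ < pathLength γ / 2 + pathLength γ / 2 := ENNReal.add_lt_add_left hhalf hlt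
      _ = pointedSystole X p := by rw [ENNReal.add_halves, hlen]
  refine (γ.homotopic_subpath_trans_subpath s).trans
    (Path.trans_homotopic_refl_of_trans_symm (δ := δ) ?_ ?_) <;>
    apply homotopic_refl_of_pathLength_lt_pointedSystole
  · calc _ ≤ pathLength (γ.subpath 0 s) + pathLength δ.symm := pathLength_trans_le _ _
      _ < pointedSystole X p := by
        rw [pathLength_symm]
        exact hshort _ ((pathLength_subpath_le γ nonneg').trans hs.le)
  · calc _ ≤ pathLength δ + pathLength (γ.subpath s 1) := pathLength_trans_le _ _
      _ < pointedSystole X p := by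
        rw [add_comm]
        exact hshort _ ((pathLength_subpath_le γ le_one').trans hs'.le)

/-- A pointed systolic loop at `p` is formed of two distance-minimizing
arcs of length `L/2` starting at `p` and ending at a common midpoint `q`: if the
restriction of `γ` to `[0,s]` has length `L/2`, then `dist(p, γ s) = L/2`. -/
theorem pointed_systolic_loop_two_minimizing_arcs {X : Type*} [MetricSpace X] [CompactSpace X]
    (hgeo : IsGeodesicSpace X) (p : X)
    (hpos : 0 < pointedSystole X p) (hfin : pointedSystole X p ≠ ⊤)
    (γ : Path p p) (hnc : ¬γ.Homotopic (Path.refl p))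
    (hlen : pathLength γ = pointedSystole X p)
    (s : unitInterval) (hs : eVariationOn γ (Set.Icc 0 s) = pathLength γ / 2) :
    edist p (γ s) = pathLength γ / 2 :=
  pointed_systolic_loop_two_minimizing_arcs_general hgeo p hfin γ hnc hlen s hs
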